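/- Let p > K ≥ 1, let B be a real p×K matrix of full column rank K, and let Ψ be a p×p symmetric positive definite matrix. Set Σ = BBᵀ + Ψ, D = diag(Σ), and R = D^{−1/2} Σ D^{−1/2}. If ‖D^{−1}Ψ‖ ≤ 1, then the number of eigenvalues of R that are strictly greater than 1 is at most K, i.e. #{ j ∈ {1,…,p} : λ_j(R) > 1 } ≤ K. -/

import Mathlib

open MeasureTheory Filter Matrix
open scoped BigOperators Topology

/-- The eigenvalues of a (Hermitian) real matrix, sorted in decreasing order. -/
noncomputable def eigDesc {p : ℕ} (A : Matrix (Fin p) (Fin p) ℝ) : Fin p → ℝ :=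
  if hA : A.IsHermitian then fun j => hA.eigenvalues (Tuple.sort hA.eigenvalues j.rev) else 0

/-- The operator (spectral) norm of a real matrix. -/
noncomputable def specNorm {m n : ℕ} (M : Matrix (Fin m) (Fin n) ℝ) : ℝ :=
  Real.sqrt (⨆ j : Fin m, eigDesc (M * Mᵀ) j)

/-- The correlation matrix `R = D^{-1/2} Σ D^{-1/2}` with `Σ = BBᵀ + Ψ`, `D = diag(Σ)`. -/
noncomputable def corrOf {p K : ℕ} (B : Matrix (Fin p) (Fin K) ℝ)
    (Ψ : Matrix (Fin p) (Fin p) ℝ) : Matrix (Fin p) (Fin p) ℝ :=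
  (Matrix.diagonal fun i => (Real.sqrt ((B * Bᵀ + Ψ) i i))⁻¹) * (B * Bᵀ + Ψ) *
    (Matrix.diagonal fun i => (Real.sqrt ((B * Bᵀ + Ψ) i i))⁻¹)

/-!
Write `w = diag(Σ)^{-1/2}` as a vector. Then `R = LᵀL + S` with `L = Bᵀ diag(w)` (a `K × p`
matrix) and `S = diag(w) Ψ diag(w)`. Since `Mᵀ diag(w)⁻¹ = diag(w)⁻¹ S` for `M = D⁻¹Ψ`, every
eigenvalue `μ` of `S` is an eigenvalue of `Mᵀ`, so `μ² ≤ ‖M‖² ≤ 1`. Hence `vᵀRv = vᵀSv ≤ |v|²` on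
`ker L`, which has codimension at most `K`, while `vᵀRv > |v|²` for every nonzero `v` in the span
of the eigenvectors of `R` with eigenvalue `> 1`. The two subspaces meet only in `0`, so that span
has dimension at most `K`.
-/

open Finset

lemma eq_zero_of_sum_mul_mul_self_nonpos {ι : Type*} [Fintype ι] {a x : ι → ℝ}
    (ha : ∀ i, 0 < a i) (h : ∑ i, a i * (x i * x i) ≤ 0) : x = 0 := by
  have hterm : ∀ i ∈ univ, 0 ≤ a i * (x i * x i) := fun i _ =>
    mul_nonneg (ha i).le (mul_self_nonneg _)
  have hzero := (sum_eq_zero_iff_of_nonneg hterm).1 (le_antisymm h (sum_nonneg hterm))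
  funext i
  exact mul_self_eq_zero.1 ((mul_eq_zero.1 (hzero i (mem_univ i))).resolve_left (ha i).ne')

namespace Matrix

variable {m n : Type*} [Fintype n]

lemma mulVec_dotProduct_mulVec_mulVec [Fintype m] {R : Type*} [CommSemiring R] (P : Matrix n m R)
    (A : Matrix n n R) (x : m → R) :
    (P *ᵥ x) ⬝ᵥ (A *ᵥ (P *ᵥ x)) = x ⬝ᵥ ((Pᵀ * A * P) *ᵥ x) := by
  rw [← mulVec_mulVec, ← mulVec_mulVec, dotProduct_mulVec x, vecMul_transpose]

lemma mulVec_dotProduct_mulVec_self_of_transpose_mul_self [Fintype m] {R : Type*}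
    [CommSemiring R] [DecidableEq m] [DecidableEq n] {P : Matrix n m R} (hP : Pᵀ * P = 1)
    (x : m → R) :
    (P *ᵥ x) ⬝ᵥ (P *ᵥ x) = x ⬝ᵥ x := by
  simpa [hP] using mulVec_dotProduct_mulVec_mulVec P 1 x

lemma transpose_submatrix_mul_mul_submatrix {l : Type*} {R : Type*} [CommSemiring R]
    (P : Matrix n m R) (A : Matrix n n R) (f : l → m) :
    (P.submatrix id f)ᵀ * A * P.submatrix id f = (Pᵀ * A * P).submatrix f f := by
  rw [submatrix_mul _ _ _ id _ Function.bijective_id,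
    submatrix_mul _ _ _ id _ Function.bijective_id, submatrix_id_id, transpose_submatrix]

lemma dotProduct_mulVec_transpose_mul_add_of_mulVec_eq_zero {k : Type*} [Fintype k]
    {L : Matrix k n ℝ} {v : n → ℝ} (hv : L *ᵥ v = 0) (S : Matrix n n ℝ) :
    v ⬝ᵥ ((Lᵀ * L + S) *ᵥ v) = v ⬝ᵥ (S *ᵥ v) := by
  rw [add_mulVec, dotProduct_add, ← mulVec_mulVec, dotProduct_mulVec, vecMul_transpose, hv,
    zero_dotProduct, zero_add]

lemma diagonal_mul_mul_transpose_add_mul_diagonal {k : Type*} [Fintype k] [DecidableEq n]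
    {R : Type*} [CommSemiring R] (w : n → R) (B : Matrix n k R) (Ψ : Matrix n n R) :
    diagonal w * (B * Bᵀ + Ψ) * diagonal w =
      (Bᵀ * diagonal w)ᵀ * (Bᵀ * diagonal w) + diagonal w * Ψ * diagonal w := by
  rw [transpose_mul, transpose_transpose, diagonal_transpose, Matrix.mul_add, Matrix.add_mul]
  simp only [Matrix.mul_assoc]

lemma isHermitian_mul_transpose_self (M : Matrix m n ℝ) :
    (M * Mᵀ).IsHermitian := by
  simpa using isHermitian_mul_conjTranspose_self M

lemma posSemidef_mul_transpose_self [Fintype m] (M : Matrix m n ℝ) :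
    (M * Mᵀ).PosSemidef := by
  simpa using posSemidef_self_mul_conjTranspose M

namespace IsHermitian

variable [DecidableEq n] {A : Matrix n n ℝ} (hA : A.IsHermitian)

lemma eigenvectorUnitary_transpose_mul_self :
    (hA.eigenvectorUnitary : Matrix n n ℝ)ᵀ * hA.eigenvectorUnitary = 1 := by
  simpa [star_eq_conjTranspose] using Unitary.coe_star_mul_self hA.eigenvectorUnitary

lemma eigenvectorUnitary_transpose_mul_mul :
    (hA.eigenvectorUnitary : Matrix n n ℝ)ᵀ * A * hA.eigenvectorUnitary =
      diagonal hA.eigenvalues := by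
  simpa [Unitary.conjStarAlgAut_star_apply, star_eq_conjTranspose] using
    hA.conjStarAlgAut_star_eigenvectorUnitary

lemma dotProduct_mulVec_le {c : ℝ} (hc : ∀ i, hA.eigenvalues i ≤ c) (v : n → ℝ) :
    v ⬝ᵥ (A *ᵥ v) ≤ c * (v ⬝ᵥ v) := by
  set U : Matrix n n ℝ := ↑hA.eigenvectorUnitary
  obtain ⟨x, rfl⟩ : ∃ x, U *ᵥ x = v := ⟨Uᵀ *ᵥ v, by
    rw [mulVec_mulVec, mul_eq_one_comm.mp hA.eigenvectorUnitary_transpose_mul_self, one_mulVec]⟩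
  rw [mulVec_dotProduct_mulVec_mulVec, hA.eigenvectorUnitary_transpose_mul_mul,
    mulVec_dotProduct_mulVec_self_of_transpose_mul_self hA.eigenvectorUnitary_transpose_mul_self,
    dotProduct, dotProduct, mul_sum]
  simp only [mulVec_diagonal]
  exact sum_le_sum fun i _ => by nlinarith [hc i, mul_self_nonneg (x i)]

lemma card_eigenvalues_gt_le {k : Type*} [Fintype k] (L : Matrix k n ℝ) {c : ℝ}
    (hL : ∀ v, L *ᵥ v = 0 → v ⬝ᵥ (A *ᵥ v) ≤ c * (v ⬝ᵥ v)) :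
    #{i | c < hA.eigenvalues i} ≤ Fintype.card k := by
  set T := ({i | c < hA.eigenvalues i} : Finset n)
  set P : Matrix n T ℝ := (hA.eigenvectorUnitary : Matrix n n ℝ).submatrix id Subtype.val
  have hPP : Pᵀ * P = 1 := by
    rw [← Matrix.mul_one Pᵀ, transpose_submatrix_mul_mul_submatrix, Matrix.mul_one,
      eigenvectorUnitary_transpose_mul_self, submatrix_one _ Subtype.val_injective]
  have hPAP : Pᵀ * A * P = diagonal fun t : T => hA.eigenvalues t := by
    rw [transpose_submatrix_mul_mul_submatrix, eigenvectorUnitary_transpose_mul_mul,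
      submatrix_diagonal _ _ Subtype.val_injective]
    rfl
  have hinj : Function.Injective (L * P).mulVecLin := by
    refine (injective_iff_map_eq_zero _).mpr fun x hx => ?_
    have hle := hL (P *ᵥ x) (by rw [mulVec_mulVec]; exact hx)
    rw [mulVec_dotProduct_mulVec_mulVec, hPAP,
      mulVec_dotProduct_mulVec_self_of_transpose_mul_self hPP] at hle
    simp only [dotProduct, mulVec_diagonal, mul_sum] at hle
    have hgap : ∀ t : T, 0 < hA.eigenvalues t - c := fun t => sub_pos.2 (mem_filter.1 t.2).2
    refine eq_zero_of_sum_mul_mul_self_nonpos hgap ?_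
    calc ∑ t : T, (hA.eigenvalues t - c) * (x t * x t)
        = ∑ t, (x t * (hA.eigenvalues t * x t) - c * (x t * x t)) :=
          sum_congr rfl fun t _ => by ring
      _ ≤ 0 := by rw [sum_sub_distrib]; linarith
  calc #T = Module.finrank ℝ (T → ℝ) := by simp
    _ ≤ Module.finrank ℝ (k → ℝ) := LinearMap.finrank_le_finrank_of_injective hinj
    _ = Fintype.card k := Module.finrank_fintype_fun_eq_card ℝ

end IsHermitian

lemma sq_le_of_transpose_mulVec_eq_smul [DecidableEq n] {M : Matrix n n ℝ} {c : ℝ} (hc : ∀ i, (isHermitian_mul_transpose_self M).eigenvalues i ≤ c)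
    {μ : ℝ} {y : n → ℝ} (hy : y ≠ 0) (hμ : Mᵀ *ᵥ y = μ • y) : μ ^ 2 ≤ c := by
  have hle := (isHermitian_mul_transpose_self M).dotProduct_mulVec_le hc y
  rw [← mulVec_mulVec, dotProduct_mulVec, ← mulVec_transpose, hμ, smul_dotProduct,
    dotProduct_smul, smul_eq_mul, smul_eq_mul] at hle
  have hpos : 0 < y ⬝ᵥ y := by simpa using dotProduct_self_star_pos_iff.2 hy
  nlinarith

lemma sq_eigenvalues_diagonal_mul_mul_diagonal_le [DecidableEq n] {Ψ : Matrix n n ℝ} (hΨ : Ψ.IsHermitian) {w : n → ℝ} (hw : ∀ i, w i ≠ 0) {c : ℝ}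
    (hc : ∀ j, (isHermitian_mul_transpose_self (diagonal (w * w) * Ψ)).eigenvalues j ≤ c)
    (hS : (diagonal w * Ψ * diagonal w).IsHermitian) (i : n) :
    hS.eigenvalues i ^ 2 ≤ c := by
  set u : n → ℝ := ⇑(hS.eigenvectorBasis i)
  have hinv : diagonal w * diagonal w⁻¹ = 1 := by
    rw [diagonal_mul_diagonal, ← diagonal_one]
    exact congrArg diagonal (funext fun j => mul_inv_cancel₀ (hw j))
  have hconj :
      (diagonal (w * w) * Ψ)ᵀ * diagonal w⁻¹ = diagonal w⁻¹ * (diagonal w * Ψ * diagonal w) := by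
    have hww : (fun j => (w * w) j * w⁻¹ j) = w := funext fun j => by simp [hw j]
    have hw1 : (fun j => w⁻¹ j * w j) = fun _ => 1 := funext fun j => inv_mul_cancel₀ (hw j)
    rw [transpose_mul, diagonal_transpose, (isHermitian_iff_isSymm.1 hΨ).eq, Matrix.mul_assoc,
      diagonal_mul_diagonal, hww, ← Matrix.mul_assoc, ← Matrix.mul_assoc, diagonal_mul_diagonal,
      hw1, diagonal_one, Matrix.one_mul]
  refine sq_le_of_transpose_mulVec_eq_smul hc (y := diagonal w⁻¹ *ᵥ u) ?_ ?_
  · intro hy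
    have hu : u = 0 := by rw [← one_mulVec u, ← hinv, ← mulVec_mulVec, hy, mulVec_zero]
    exact hS.eigenvectorBasis.orthonormal.ne_zero i (WithLp.ofLp_injective 2 hu)
  · rw [mulVec_mulVec, hconj, ← mulVec_mulVec, hS.mulVec_eigenvectorBasis, mulVec_smul]

end Matrix

lemma eigDesc_eq_comp {p : ℕ} {A : Matrix (Fin p) (Fin p) ℝ} (hA : A.IsHermitian) :
    eigDesc A = hA.eigenvalues ∘ (Fin.revPerm.trans (Tuple.sort hA.eigenvalues)) := by
  rw [eigDesc, dif_pos hA]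
  rfl

lemma ncard_eigDesc_gt {p : ℕ} {A : Matrix (Fin p) (Fin p) ℝ} (hA : A.IsHermitian) (c : ℝ) :
    {j | c < eigDesc A j}.ncard = #{i | c < hA.eigenvalues i} := by
  set e := Fin.revPerm.trans (Tuple.sort hA.eigenvalues)
  have hpre : {j | c < eigDesc A j} = e ⁻¹' {i | c < hA.eigenvalues i} := by
    rw [eigDesc_eq_comp hA]; rfl
  rw [hpre, Set.ncard_preimage_of_injective_subset_range e.injective (by simp),
    ← Set.ncard_coe_finset, coe_filter]
  simp

lemma eigenvalues_le_specNorm_sq {m n : ℕ} (M : Matrix (Fin m) (Fin n) ℝ) (i : Fin m) :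
    (isHermitian_mul_transpose_self M).eigenvalues i ≤ specNorm M ^ 2 := by
  set hN := isHermitian_mul_transpose_self M
  have hle : hN.eigenvalues i ≤ ⨆ j, eigDesc (M * Mᵀ) j := by
    rw [eigDesc_eq_comp hN]
    exact le_ciSup_of_le (Set.finite_range _).bddAbove
      ((Fin.revPerm.trans (Tuple.sort hN.eigenvalues)).symm i) (by simp)
  have h0 : 0 ≤ hN.eigenvalues i := (posSemidef_mul_transpose_self M).eigenvalues_nonneg i
  rwa [specNorm, Real.sq_sqrt (h0.trans hle)]

lemma eigenvalues_diagonal_mul_mul_diagonal_le_one {p : ℕ} {Ψ : Matrix (Fin p) (Fin p) ℝ}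
    (hΨ : Ψ.IsHermitian) {w : Fin p → ℝ} (hw : ∀ i, w i ≠ 0)
    (hnorm : specNorm (diagonal (w * w) * Ψ) ≤ 1)
    (hS : (diagonal w * Ψ * diagonal w).IsHermitian) (i : Fin p) :
    hS.eigenvalues i ≤ 1 :=
  (le_abs_self _).trans <| (sq_le_one_iff_abs_le_one _).1 <|
    sq_eigenvalues_diagonal_mul_mul_diagonal_le hΨ hw (fun j =>
      (eigenvalues_le_specNorm_sq _ j).trans (pow_le_one₀ (Real.sqrt_nonneg _) hnorm)) hS i

theorem number_of_eigenvalues_gt_one_le_K_general {p K : ℕ}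
    (B : Matrix (Fin p) (Fin K) ℝ)
    (Ψ : Matrix (Fin p) (Fin p) ℝ) (hΨ : Ψ.PosDef)
    (hnorm : specNorm ((Matrix.diagonal fun i => ((B * Bᵀ + Ψ) i i)⁻¹) * Ψ) ≤ 1) :
    Set.ncard {j : Fin p | 1 < eigDesc (corrOf B Ψ) j} ≤ K := by
  set w : Fin p → ℝ := fun i => (Real.sqrt ((B * Bᵀ + Ψ) i i))⁻¹
  have hdiag : ∀ i, 0 < (B * Bᵀ + Ψ) i i := fun i =>
    (PosDef.posSemidef_add (posSemidef_mul_transpose_self B) hΨ).diag_pos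
  have hw : ∀ i, w i ≠ 0 := fun i => inv_ne_zero (Real.sqrt_pos.2 (hdiag i)).ne'
  have hww : (fun i => ((B * Bᵀ + Ψ) i i)⁻¹) = w * w := funext fun i => by
    rw [Pi.mul_apply, ← mul_inv, Real.mul_self_sqrt (hdiag i).le]
  rw [hww] at hnorm
  have hS : (diagonal w * Ψ * diagonal w).IsHermitian := by
    simpa using isHermitian_conjTranspose_mul_mul (diagonal w) hΨ.isHermitian
  have hR : corrOf B Ψ = (Bᵀ * diagonal w)ᵀ * (Bᵀ * diagonal w) + diagonal w * Ψ * diagonal w :=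
    diagonal_mul_mul_transpose_add_mul_diagonal w B Ψ
  have hRherm : (corrOf B Ψ).IsHermitian := hR ▸
    ((isHermitian_conjTranspose_mul_self _).add hS)
  rw [ncard_eigDesc_gt hRherm]
  simpa using hRherm.card_eigenvalues_gt_le (Bᵀ * diagonal w) fun v hv => by
    rw [hR, dotProduct_mulVec_transpose_mul_add_of_mulVec_eq_zero hv]
    exact hS.dotProduct_mulVec_le
      (eigenvalues_diagonal_mul_mul_diagonal_le_one hΨ.isHermitian hw hnorm hS) v

/-- under the factor-model covariance structure with `‖D⁻¹Ψ‖ ≤ 1`,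
the number of eigenvalues of the correlation matrix `R` strictly exceeding `1`
is at most `K`. -/
theorem number_of_eigenvalues_gt_one_le_K {p K : ℕ} (hK : 1 ≤ K) (hKp : K < p)
    (B : Matrix (Fin p) (Fin K) ℝ) (hB : B.rank = K)
    (Ψ : Matrix (Fin p) (Fin p) ℝ) (hΨ : Ψ.PosDef)
    (hnorm : specNorm ((Matrix.diagonal fun i => ((B * Bᵀ + Ψ) i i)⁻¹) * Ψ) ≤ 1) :
    Set.ncard {j : Fin p | 1 < eigDesc (corrOf B Ψ) j} ≤ K :=
  number_of_eigenvalues_gt_one_le_K_general B Ψ hΨ hnorm
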